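/- arXiv:1405.3004 — 7 statements merged into one kernel-verified Lean document; each statement's English description precedes it below -/
import Mathlib

section
/- Let (C, d) be a chain complex over 𝔽₂ with a distinguished basis G, and write c_{xy} for the coefficient of y in d(x). Suppose x, y ∈ G are distinct basis elements with c_{xy} = 1. Define a differential d' on the free 𝔽₂-module generated by G' = G \ {x,y} by setting the coefficient of c in d'(a) to be c_{ac} + c_{ay}·c_{xc}. Then d' ∘ d' = 0. -/
/-!
Over any commutative ring, cancelling the pair `x → y` replaces `c` by
`c'_{ab} = c_{ab} - c_{ay} c_{xb}`, which over `𝔽₂` is the given formula. Expanding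
`∑_e c'_{ae} c'_{eb}` over all of `G` gives a combination of entries of `d ∘ d`, hence `0`.
When `c_{xy} = 1` the column `y` and the row `x` of `c'` vanish, so the summands at `e = x`
and `e = y` are zero and the sum over `G \ {x, y}` is the same as the sum over `G`.
-/

open Finset

section Cancellation

variable {R G : Type*} [CommRing R] (c : G → G → R) (x y : G)

def cancelledCoeff (a b : G) : R := c a b - c a y * c x b

theorem cancelledCoeff_to_y_eq_zero (hcxy : c x y = 1) (a : G) :
    cancelledCoeff c x y a y = 0 := by
  simp [cancelledCoeff, hcxy]

theorem cancelledCoeff_from_x_eq_zero (hcxy : c x y = 1) (b : G) :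
    cancelledCoeff c x y x b = 0 := by
  simp [cancelledCoeff, hcxy]

theorem sum_cancelledCoeff_mul_cancelledCoeff [Fintype G]
    (hd2 : ∀ a b : G, ∑ e, c a e * c e b = 0) (a b : G) :
    ∑ e, cancelledCoeff c x y a e * cancelledCoeff c x y e b = 0 := by
  calc ∑ e, cancelledCoeff c x y a e * cancelledCoeff c x y e b
      = (∑ e, c a e * c e b) - (∑ e, c a e * c e y) * c x b
          - c a y * (∑ e, c x e * c e b) + c a y * c x b * (∑ e, c x e * c e y) := by
        simp only [cancelledCoeff, mul_sum, sum_mul, ← sum_sub_distrib, ← sum_add_distrib]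
        exact sum_congr rfl fun e _ => by ring
    _ = 0 := by simp only [hd2]; ring

end Cancellation

theorem Fintype.sum_subtype_eq_sum_of_forall_not {G M : Type*} [Fintype G] [AddCommMonoid M]
    (p : G → Prop) [DecidablePred p] (f : G → M) (hf : ∀ g, ¬p g → f g = 0) :
    ∑ g : {g // p g}, f g = ∑ g, f g := by
  rw [← sum_subtype {g | p g} (by simp) f,
    sum_filter_of_ne fun g _ hg => not_imp_comm.mp (hf g) hg]

theorem cancellation_squares_to_zero_general {G : Type*} [Fintype G] [DecidableEq G]
    (c : G → G → ZMod 2)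
    (hd2 : ∀ a b : G, ∑ e : G, c a e * c e b = 0)
    (x y : G) (hcxy : c x y = 1) :
    ∀ a b : {g : G // g ≠ x ∧ g ≠ y},
      ∑ e : {g : G // g ≠ x ∧ g ≠ y},
        (c ↑a ↑e + c ↑a y * c x ↑e) * (c ↑e ↑b + c ↑e y * c x ↑b) = 0 := by
  intro a b
  simp only [← CharTwo.sub_eq_add]
  change ∑ e : {g : G // g ≠ x ∧ g ≠ y},
    cancelledCoeff c x y a e * cancelledCoeff c x y e b = 0
  rw [Fintype.sum_subtype_eq_sum_of_forall_not _
    (fun e => cancelledCoeff c x y a e * cancelledCoeff c x y e b)]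
  · exact sum_cancelledCoeff_mul_cancelledCoeff c x y hd2 a b
  · intro e he
    rcases not_and_or.mp he with hex | hey
    · rw [not_not.mp hex, cancelledCoeff_from_x_eq_zero c x y hcxy, mul_zero]
    · rw [not_not.mp hey, cancelledCoeff_to_y_eq_zero c x y hcxy, zero_mul]

/-- Cancellation for chain complexes over `𝔽₂`: if `(c_{ab})` are the structure
coefficients of a differential (`d ∘ d = 0` in coefficient form), `x ≠ y`, and
`c_{xy} = 1`, then the cancelled coefficients `c'_{ac} = c_{ac} + c_{ay} c_{xc}`
on `G' = G \ {x, y}` again satisfy `d' ∘ d' = 0` in coefficient form. -/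
theorem cancellation_squares_to_zero {G : Type*} [Fintype G] [DecidableEq G]
    (c : G → G → ZMod 2)
    (hd2 : ∀ a b : G, ∑ e : G, c a e * c e b = 0)
    (x y : G) (hxy : x ≠ y) (hcxy : c x y = 1) :
    ∀ a b : {g : G // g ≠ x ∧ g ≠ y},
      ∑ e : {g : G // g ≠ x ∧ g ≠ y},
        (c ↑a ↑e + c ↑a y * c x ↑e) * (c ↑e ↑b + c ↑e y * c x ↑b) = 0 :=
  cancellation_squares_to_zero_general c hd2 x y hcxy
end

section
/- In the setting of cancellation of a pair x, y with c_{xy} = 1 in an 𝔽₂ chain complex (C,d) with basis G: define f : C → C' on basis elements by f(x) = 0, f(y) = Σ_{b∈G'} c_{xb}·b, f(a) = a for a ∈ G' = G\{x,y}, and g : C' → C by g(a) = a + c_{ay}·x. Then f and g are chain maps (f ∘ d = d' ∘ f and g ∘ d' = d ∘ g), where d' has coefficients c'_{ac} = c_{ac} + c_{ay}c_{xc}. -/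
/-!
Extend `c'_{ab} = c_{ab} + c_{ay} c_{xb}` to all of `G`. Since `c_{xy} = 1` in characteristic 2,
the row `x` and the column `y` of `c'` vanish, and `d² = 0` gives
`∑_e c_{xe} c'_{eb} = 0 = ∑_e c'_{ae} c_{ey}`. Each side of both chain-map identities then equals
`c'_{ab}`: the sums over `G` directly, the sums over `G'` after adding back the terms at `x`, `y`.
-/

open Finset

theorem Fintype.sum_subtype_ne_and_ne {G M : Type*} [Fintype G] [DecidableEq G] [AddCommGroup M]
    {x y : G} (hxy : x ≠ y) (F : G → M) :
    ∑ e : {g : G // g ≠ x ∧ g ≠ y}, F e = ∑ e, F e - F x - F y := by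
  rw [← Finset.sum_subtype (univ \ {x, y}) (by simp [not_or]) F,
    sum_sdiff_eq_sub (subset_univ _), sum_pair hxy, sub_sub]

section

variable {G R : Type*} [CommRing R] (c : G → G → R) (x y : G)

def cancelCoeff (a b : G) : R := c a b + c a y * c x b

variable [DecidableEq G]

/-- The coefficient of `b` in `f(a)`. -/
def cancelF (a b : G) : R := if a = y then c x b else if a = b then 1 else 0

/-- The coefficient of `b` in `g(a)`. -/
def cancelG (a b : G) : R := (if a = b then 1 else 0) + (if b = x then c a y else 0)

end

section

variable {G R : Type*} [CommRing R] {c : G → G → R} {x y : G}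

theorem cancelCoeff_left_self [CharP R 2] (hcxy : c x y = 1) (b : G) :
    cancelCoeff c x y x b = 0 := by
  simp [cancelCoeff, hcxy, CharTwo.add_self_eq_zero]

theorem cancelCoeff_right_self [CharP R 2] (hcxy : c x y = 1) (a : G) :
    cancelCoeff c x y a y = 0 := by
  simp [cancelCoeff, hcxy, CharTwo.add_self_eq_zero]

variable [Fintype G]

theorem sum_mul_cancelCoeff (hd2 : ∀ a b : G, ∑ e : G, c a e * c e b = 0) (b : G) :
    ∑ e, c x e * cancelCoeff c x y e b = 0 := by
  simp only [cancelCoeff, mul_add, ← mul_assoc, sum_add_distrib, ← sum_mul, hd2, zero_mul,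
    add_zero]

theorem sum_cancelCoeff_mul (hd2 : ∀ a b : G, ∑ e : G, c a e * c e b = 0) (a : G) :
    ∑ e, cancelCoeff c x y a e * c e y = 0 := by
  simp only [cancelCoeff, add_mul, mul_assoc, sum_add_distrib, ← mul_sum, hd2, mul_zero,
    add_zero]

variable [DecidableEq G]

theorem sum_mul_cancelF {b : G} (hby : b ≠ y) (a : G) :
    ∑ e, c a e * cancelF c x y e b = cancelCoeff c x y a b := by
  rw [Fintype.sum_eq_add y b hby.symm fun e he => by simp [cancelF, he.1, he.2]]
  simp [cancelF, hby, cancelCoeff, add_comm]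

theorem sum_cancelG_mul (a b : G) :
    ∑ e, cancelG c x y a e * c e b = cancelCoeff c x y a b := by
  simp [cancelG, cancelCoeff, add_mul, sum_add_distrib]

theorem sum_cancelF_mul_cancelCoeff [CharP R 2] (hd2 : ∀ a b : G, ∑ e : G, c a e * c e b = 0)
    (hxy : x ≠ y) (hcxy : c x y = 1) (a b : G) :
    ∑ e : {g : G // g ≠ x ∧ g ≠ y}, cancelF c x y a e * cancelCoeff c x y e b
      = cancelCoeff c x y a b := by
  rw [Fintype.sum_subtype_ne_and_ne hxy fun e => cancelF c x y a e * cancelCoeff c x y e b,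
    cancelCoeff_left_self hcxy, mul_zero, sub_zero]
  by_cases hay : a = y
  · subst hay
    simp [cancelF, sum_mul_cancelCoeff hd2, hcxy, CharTwo.neg_eq]
  · simp [cancelF, hay]

theorem sum_cancelCoeff_mul_cancelG [CharP R 2] (hd2 : ∀ a b : G, ∑ e : G, c a e * c e b = 0)
    (hxy : x ≠ y) (hcxy : c x y = 1) (a b : G) :
    ∑ e : {g : G // g ≠ x ∧ g ≠ y}, cancelCoeff c x y a e * cancelG c x y e b
      = cancelCoeff c x y a b := by
  have hgx : cancelG c x y x b = 0 := by
    by_cases hbx : b = x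
    · simp [cancelG, hbx, hcxy, CharTwo.add_self_eq_zero]
    · simp [cancelG, hbx, Ne.symm hbx]
  rw [Fintype.sum_subtype_ne_and_ne hxy fun e => cancelCoeff c x y a e * cancelG c x y e b,
    cancelCoeff_right_self hcxy, hgx, zero_mul, mul_zero,
    sub_zero, sub_zero]
  simp [cancelG, mul_add, sum_add_distrib, sum_cancelCoeff_mul hd2]

end

/-- In the cancellation setup over `𝔽₂` (basis `G`, coefficients `c`, `x ≠ y`
with `c_{xy} = 1`), the maps `f : C → C'` (with `f(x) = 0`,
`f(y) = ∑_{b∈G'} c_{xb} b`, `f(a) = a` for `a ∈ G'`) and `g : C' → C`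
(with `g(a) = a + c_{ay} x`) are chain maps: `f ∘ d = d' ∘ f` and
`g ∘ d' = d ∘ g` in coefficient form, where `c'_{ac} = c_{ac} + c_{ay} c_{xc}`. -/
theorem cancellation_f_g_chain_maps {G : Type*} [Fintype G] [DecidableEq G]
    (c : G → G → ZMod 2)
    (hd2 : ∀ a b : G, ∑ e : G, c a e * c e b = 0)
    (x y : G) (hxy : x ≠ y) (hcxy : c x y = 1) :
    (∀ (a : G) (b : {g : G // g ≠ x ∧ g ≠ y}),
        ∑ e : G, c a e * (if e = y then c x ↑b else if e = ↑b then 1 else 0)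
          = ∑ e : {g : G // g ≠ x ∧ g ≠ y},
              (if a = y then c x ↑e else if a = ↑e then 1 else 0)
                * (c ↑e ↑b + c ↑e y * c x ↑b)) ∧
    (∀ (a : {g : G // g ≠ x ∧ g ≠ y}) (b : G),
        ∑ e : {g : G // g ≠ x ∧ g ≠ y},
            (c ↑a ↑e + c ↑a y * c x ↑e)
              * ((if (↑e : G) = b then 1 else 0) + (if b = x then c ↑e y else 0))
          = ∑ e : G,
              ((if (↑a : G) = e then 1 else 0) + (if e = x then c ↑a y else 0))
                * c e b) := by
  refine ⟨fun a b => ?_, fun a b => ?_⟩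
  · exact (sum_mul_cancelF b.2.2 a).trans (sum_cancelF_mul_cancelCoeff hd2 hxy hcxy a b).symm
  · exact (sum_cancelCoeff_mul_cancelG hd2 hxy hcxy a b).trans (sum_cancelG_mul (a : G) b).symm
end

section
/- In the setting of cancellation of a pair x, y with c_{xy} = 1 in an 𝔽₂ chain complex: with f, g, d' as defined, f ∘ g = id on C', and g ∘ f = id + h∘d + d∘h on C, where h is the linear map with h(y) = x and h(a) = 0 for all basis elements a ≠ y. Hence f and g are mutually inverse homotopy equivalences. -/
/-!
Write `g = (1 + hd) ∘ ι` and `f = π ∘ (1 + dh)`, where `ι : C' → C` and `π : C → C'` are the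
inclusion of and projection onto the span of `G'`. Since `h² = 0`, `f ∘ g = π (1 + dh + hd) ι`,
and `dh`, `hd` have no matrix entries between basis elements of `G'`, so `f ∘ g = id`.
For `g ∘ f = (1 + hd) ι π (1 + dh)` the projection `ι π` can be dropped: over `𝔽₂` and with
`c_{xy} = 1` we have `(1 + hd)(x) = 0`, and the image of `1 + dh` has no `y`-component. What remains is
`(1 + hd)(1 + dh) = 1 + hd + dh`, because `d² = 0`.
-/

open Matrix

theorem one_add_mul_one_add_of_mul_eq_zero {α : Type*} [NonAssocSemiring α] {a b : α}
    (h : a * b = 0) : (1 + a) * (1 + b) = 1 + a + b := by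
  rw [add_mul, one_mul, mul_add, mul_one, h, add_zero, add_right_comm]

theorem Matrix.submatrix_id_val_mul_submatrix_val_id {m n l R : Type*} [Fintype n]
    [NonUnitalNonAssocSemiring R] {p : n → Prop} [DecidablePred p]
    (A : Matrix m n R) (B : Matrix n l R) (h : ∀ e, ¬p e → ∀ a b, A a e * B e b = 0) :
    A.submatrix id (Subtype.val : Subtype p → n) * B.submatrix (Subtype.val : Subtype p → n) id
      = A * B := by
  refine Matrix.ext fun a b => ?_
  simp only [mul_apply, submatrix_apply, id]
  rw [← Finset.sum_subtype (Finset.univ.filter p) (by simp) fun e => A a e * B e b]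
  exact Finset.sum_filter_of_ne fun e _ he => not_not.mp fun hpe => he (h e hpe a b)

/- A linear map is encoded by its matrix `M` with `M a b` the coefficient of `b` in the image
of `a`, so the matrix of `ψ ∘ φ` is `Mφ * Mψ`. The differential `d` is `c`, and `homotopy`,
`incl`, `proj` are the maps `h`, `g`, `f`. -/
namespace Cancellation

variable {G R : Type*} [DecidableEq G] [Ring R] (x y : G)

def homotopy : Matrix G G R := of fun a b => if a = y ∧ b = x then 1 else 0

variable [Fintype G]

@[simp]
theorem mul_homotopy_apply (M : Matrix G G R) (a b : G) :
    (M * (homotopy x y : Matrix G G R)) a b = if b = x then M a y else 0 := by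
  simp [homotopy, mul_apply, and_comm (a := _ = y), ite_and]

@[simp]
theorem homotopy_mul_apply (M : Matrix G G R) (a b : G) :
    ((homotopy x y : Matrix G G R) * M) a b = if a = y then M x b else 0 := by
  simp [homotopy, mul_apply, ite_and]

theorem homotopy_mul_homotopy {x y : G} (hxy : x ≠ y) :
    homotopy x y * homotopy x y = (0 : Matrix G G R) :=
  Matrix.ext fun a b => by
    rw [mul_homotopy_apply]
    simp [homotopy, hxy.symm]

variable (c : Matrix G G R)

def incl : Matrix {g : G // g ≠ x ∧ g ≠ y} G R :=
  of fun a b => (if (a : G) = b then 1 else 0) + if b = x then c a y else 0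

def proj : Matrix G {g : G // g ≠ x ∧ g ≠ y} R :=
  of fun a b => if a = y then c x b else if a = b then 1 else 0

theorem incl_eq : incl x y c = (1 + c * homotopy x y).submatrix Subtype.val id :=
  Matrix.ext fun a b => by simp [incl, one_apply]

theorem proj_eq : proj x y c = (1 + homotopy x y * c).submatrix id Subtype.val :=
  Matrix.ext fun a b => by
    by_cases hay : a = y
    · subst hay
      simp [proj, one_apply, b.2.2.symm]
    · simp [proj, one_apply, hay]

variable {x y c}

theorem incl_mul_proj (hxy : x ≠ y) : incl x y c * proj x y c = 1 := by
  have hhd_dh : c * homotopy x y * (homotopy x y * c) = 0 := by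
    rw [mul_assoc, ← mul_assoc (homotopy x y), homotopy_mul_homotopy hxy, zero_mul, mul_zero]
  rw [incl_eq, proj_eq, ← submatrix_mul _ _ _ id _ Function.bijective_id,
    one_add_mul_one_add_of_mul_eq_zero hhd_dh]
  refine Matrix.ext fun a b => ?_
  simp [one_apply, b.2.1, a.2.2, Subtype.ext_iff]

variable [CharP R 2]

theorem one_add_mul_homotopy_apply_left_eq_zero (hcxy : c x y = 1) (b : G) :
    (1 + c * homotopy x y : Matrix G G R) x b = 0 := by
  by_cases hbx : b = x
  · simp [hbx, hcxy, CharTwo.add_self_eq_zero]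
  · simp [one_apply, hbx, Ne.symm hbx]

theorem one_add_homotopy_mul_apply_right_eq_zero (hcxy : c x y = 1) (a : G) :
    (1 + homotopy x y * c : Matrix G G R) a y = 0 := by
  by_cases hay : a = y
  · simp [hay, hcxy, CharTwo.add_self_eq_zero]
  · simp [one_apply, hay]

theorem proj_mul_incl (hxy : x ≠ y) (hc : c * c = 0) (hcxy : c x y = 1) :
    proj x y c * incl x y c = 1 + c * homotopy x y + homotopy x y * c := by
  have hdh_hd : homotopy x y * c * (c * homotopy x y) = 0 := by
    rw [mul_assoc, ← mul_assoc c, hc, zero_mul, mul_zero]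
  rw [incl_eq, proj_eq, submatrix_id_val_mul_submatrix_val_id,
    one_add_mul_one_add_of_mul_eq_zero hdh_hd, add_right_comm]
  intro e he a b
  obtain rfl | rfl : e = x ∨ e = y := by tauto
  · rw [one_add_mul_homotopy_apply_left_eq_zero hcxy, mul_zero]
  · rw [one_add_homotopy_mul_apply_right_eq_zero hcxy, zero_mul]

end Cancellation

/-- In the cancellation setup over `𝔽₂` (basis `G`, coefficients `c`, `x ≠ y`
with `c_{xy} = 1`), with `f`, `g` as in the cancellation lemma and `h` the map
with `h(y) = x` and `h(a) = 0` for `a ≠ y`: `f ∘ g = id` on `C'` and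
`g ∘ f = id + h∘d + d∘h` on `C`, all in coefficient form. -/
theorem cancellation_homotopy_equivalence {G : Type*} [Fintype G] [DecidableEq G]
    (c : G → G → ZMod 2)
    (hd2 : ∀ a b : G, ∑ e : G, c a e * c e b = 0)
    (x y : G) (hxy : x ≠ y) (hcxy : c x y = 1) :
    (∀ a b : {g : G // g ≠ x ∧ g ≠ y},
        ∑ e : G,
          ((if (↑a : G) = e then 1 else 0) + (if e = x then c ↑a y else 0))
            * (if e = y then c x ↑b else if e = ↑b then 1 else 0)
          = if a = b then 1 else 0) ∧
    (∀ a b : G,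
        ∑ e : {g : G // g ≠ x ∧ g ≠ y},
          (if a = y then c x ↑e else if a = ↑e then 1 else 0)
            * ((if (↑e : G) = b then 1 else 0) + (if b = x then c ↑e y else 0))
          = (if a = b then 1 else 0)
            + (∑ e : G, c a e * (if e = y ∧ b = x then 1 else 0))
            + (∑ e : G, (if a = y ∧ e = x then (1 : ZMod 2) else 0) * c e b)) :=
  ⟨fun a b => congrFun₂ (Cancellation.incl_mul_proj (c := c) hxy) a b,
    fun a b => congrFun₂ (Cancellation.proj_mul_incl (c := c) hxy (Matrix.ext hd2) hcxy) a b⟩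
end

section
/- Let A be a unital dg-algebra over 𝔽₂ and let (c_{ab})_{a,b ∈ G} satisfy the type-D structure equation d(c_{ac}) + Σ_b c_{ab} c_{bc} = 0 on a finite index set G. Suppose x ≠ y in G with c_{xy} a unit and d(c_{xy}) = 0. Define for a, c ∈ G' = G \ {x,y}: c'_{ac} = c_{ac} + c_{ay} c_{xy}^{-1} c_{xc}; f_{yc} = c_{xy}^{-1} c_{xc}, f_{aa} = 1 (a ∈ G'), other f-coefficients zero; g_{aa} = 1, g_{ax} = c_{ay} c_{xy}^{-1} (a ∈ G'), other g-coefficients zero. Then f satisfies the type-D morphism equation d(f_{ac}) + Σ_{b∈G'} f_{ab} c'_{bc} + Σ_{b'∈G} c_{ab'} f_{b'c} = 0 for all a ∈ G, c ∈ G'. -/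
/-- Type-D cancellation over a unital dg-algebra `A` over `𝔽₂`: with
`c'_{ac} = c_{ac} + c_{ay} c_{xy}⁻¹ c_{xc}` and
`f_{yc} = c_{xy}⁻¹ c_{xc}`, `f_{aa} = 1` for `a ∈ G' = G \ {x,y}` (other
coefficients zero), `f` satisfies the type-D morphism equation
`d(f_{ac}) + ∑_{b∈G'} f_{ab} c'_{bc} + ∑_{b'∈G} c_{ab'} f_{b'c} = 0`. -/
theorem typeD_cancellation_f_morphism
    {A : Type*} [Ring A] [Algebra (ZMod 2) A]
    (d : A →+ A)
    (hleib : ∀ a b : A, d (a * b) = d a * b + a * d b)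
    (hd2 : ∀ a : A, d (d a) = 0)
    {G : Type*} [Fintype G] [DecidableEq G]
    (c : G → G → A)
    (hstr : ∀ a b : G, d (c a b) + ∑ e : G, c a e * c e b = 0)
    (x y : G) (hxy : x ≠ y)
    (u : Aˣ) (hu : (u : A) = c x y) (hdu : d (c x y) = 0) :
    ∀ (a : G) (b : {g : G // g ≠ x ∧ g ≠ y}),
      d ((if a = y then ((u⁻¹ : Aˣ) : A) * c x ↑b else 0)
          + (if a = ↑b then 1 else 0))
        + (∑ e : {g : G // g ≠ x ∧ g ≠ y},
            ((if a = y then ((u⁻¹ : Aˣ) : A) * c x ↑e else 0)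
                + (if a = ↑e then 1 else 0))
              * (c ↑e ↑b + c ↑e y * ((u⁻¹ : Aˣ) : A) * c x ↑b))
        + (∑ e' : G,
            c a e' *
              ((if e' = y then ((u⁻¹ : Aˣ) : A) * c x ↑b else 0)
                + (if e' = ↑b then 1 else 0))) = 0 := by
  have hch : ∀ z : A, z + z = 0 := by
    intro z
    have h2 : (2 : A) = 0 := by
      have h := (map_ofNat (algebraMap (ZMod 2) A) 2).symm
      rw [h, show ((2:ZMod 2)) = 0 from by decide, map_zero]
    rw [← two_mul, h2, zero_mul]
  have hneg : ∀ z : A, -z = z := fun z => neg_eq_of_add_eq_zero_left (hch z)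
  have cancel : ∀ z w : A, z + w = 0 → z = w := by
    intro z w h
    rw [eq_neg_of_add_eq_zero_left h, hneg]
  set v : A := ((u⁻¹ : Aˣ) : A) with hv
  have huv : v * c x y = 1 := by rw [← hu]; exact u.inv_mul
  have hvu : c x y * v = 1 := by rw [← hu]; exact u.mul_inv
  have hc1 : ∀ z : A, c x y * (v * z) = z := fun z => by
    rw [← mul_assoc, hvu, one_mul]
  have hc2 : ∀ z : A, v * (c x y * z) = z := fun z => by
    rw [← mul_assoc, huv, one_mul]
  have hd1 : d (1 : A) = 0 := by
    have h := hleib 1 1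
    rw [mul_one, one_mul, mul_one, hch] at h
    exact h
  have hdv : d v = 0 := by
    have h1 : d (v * c x y) = 0 := by rw [huv, hd1]
    rw [hleib, hdu, mul_zero, add_zero] at h1
    have h2 : d v * c x y * v = 0 := by rw [h1, zero_mul]
    rwa [mul_assoc, hvu, mul_one] at h2
  have hstr' : ∀ a b : G, d (c a b) = ∑ e : G, c a e * c e b :=
    fun a b => cancel _ _ (hstr a b)
  have hxyzero : ∑ e : G, c x e * c e y = 0 := by rw [← hstr' x y, hdu]
  have hsub : ∀ F : G → A, ∑ e : {g : G // g ≠ x ∧ g ≠ y}, F ↑e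
      = (∑ e : G, F e) + F x + F y := by
    intro F
    have h1 : ∑ e : {g : G // g ≠ x ∧ g ≠ y}, F ↑e
        = ∑ e ∈ Finset.univ.filter (fun g => g ≠ x ∧ g ≠ y), F e :=
      (Finset.sum_subtype _ (fun g => by simp) F).symm
    have h2 : (∑ e ∈ Finset.univ.filter (fun g => g ≠ x ∧ g ≠ y), F e) + (F x + F y)
        = ∑ e : G, F e := by
      rw [← Finset.sum_pair hxy,
        ← Finset.sum_filter_add_sum_filter_not Finset.univ (fun g => g ≠ x ∧ g ≠ y)]
      congr 1
      apply Finset.sum_congr _ (fun _ _ => rfl)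
      ext g; simp [not_and_or, or_comm]; tauto
    rw [h1, eq_sub_of_add_eq h2, sub_eq_add_neg, hneg, add_assoc]
  intro a b
  obtain ⟨b, hbx, hby⟩ := b
  simp only []
  by_cases hay : a = y
  · rw [hay]
    have hyb : (y = b) = False := eq_false (fun h => hby h.symm)
    have hye : ∀ e : {g : G // g ≠ x ∧ g ≠ y}, (y = (e : G)) = False :=
      fun e => eq_false (fun h => e.2.2 h.symm)
    simp only [eq_self_iff_true, if_true, hyb, hye, if_false, add_zero]
    rw [hleib, hdv, zero_mul, zero_add, hstr' x b, Finset.mul_sum]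
    rw [hsub (fun e => (v * c x e) * (c e b + c e y * v * c x b))]
    have hzero : ∑ e : G, (v * c x e) * (c e y * v * c x b) = 0 := by
      have heq : ∀ e ∈ Finset.univ, (v * c x e) * (c e y * v * c x b)
          = (v * (c x e * c e y)) * (v * c x b) := fun e _ => by noncomm_ring
      rw [Finset.sum_congr rfl heq, ← Finset.sum_mul, ← Finset.mul_sum, hxyzero,
        mul_zero, zero_mul]
    have hsplit : ∑ e : G, (v * c x e) * (c e b + c e y * v * c x b)
        = (∑ e : G, v * (c x e * c e b))
          + ∑ e : G, (v * c x e) * (c e y * v * c x b) := by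
      rw [← Finset.sum_add_distrib]
      exact Finset.sum_congr rfl fun e _ => by noncomm_ring
    rw [hsplit, hzero, add_zero]
    simp only [add_zero, zero_add, mul_add, mul_ite, mul_zero, mul_one,
      Finset.sum_add_distrib, Finset.sum_ite_eq', Finset.mem_univ, if_true]
    simp only [mul_assoc, hc1, hc2]
    have key : ∀ s p q r : A, s + (s + (p + p) + (q + r)) + (r + q) = 0 := by
      intro s p q r
      have h1 := hch s; have h2 := hch p; have h3 := hch q; have h4 := hch r
      linear_combination (norm := abel) h1 + h2 + h3 + h4
    exact key _ _ _ _
  · by_cases hax : a = x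
    · rw [hax]
      have hab : (x = b) = False := eq_false (fun h => hbx h.symm)
      have hxy' : (x = y) = False := eq_false hxy
      have hae : ∀ e : {g : G // g ≠ x ∧ g ≠ y}, (x = (e : G)) = False :=
        fun e => eq_false (fun h => e.2.1 h.symm)
      simp only [hxy', hab, if_false, add_zero, zero_add, map_zero, hae,
        zero_mul, Finset.sum_const_zero]
      simp only [mul_add, mul_ite, mul_zero, mul_one, Finset.sum_add_distrib,
        Finset.sum_ite_eq', Finset.mem_univ, if_true, zero_add]
      rw [← mul_assoc, hvu, one_mul, hch]
    · simp only [if_neg hay, zero_add]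
      have hdite : d (if a = b then (1:A) else 0) = 0 := by
        split_ifs <;> simp [hd1]
      rw [hdite, zero_add]
      rw [hsub (fun e => (if a = e then (1:A) else 0) * (c e b + c e y * v * c x b))]
      simp only [if_neg hax, if_neg hay, zero_mul, add_zero]
      simp only [ite_mul, one_mul, zero_mul, Finset.sum_ite_eq, Finset.mem_univ,
        if_true]
      simp only [mul_add, mul_ite, mul_zero, mul_one, Finset.sum_add_distrib,
        Finset.sum_ite_eq', Finset.mem_univ, if_true]
      simp only [mul_assoc]
      abel_nf
      simp [two_mul, two_nsmul, two_zsmul, hch]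
end

section
/- Under the hypotheses of type-D cancellation over a unital dg-algebra A over 𝔽₂ (x ≠ y ∈ G, c_{xy} a unit with d(c_{xy}) = 0), the composite coefficients satisfy (f∘g)_{ab} = Σ_{c∈G} g_{ac} f_{cb} = δ_{ab}·1 for all a, b ∈ G' = G\{x,y}; that is, f ∘ g is the identity morphism on the cancelled structure. -/
theorem Finset.sum_ite_eq_add_ite_eq_mul {R G : Type*} [NonAssocSemiring R] [Fintype G]
    [DecidableEq G] (a x : G) (p : R) (F : G → R) :
    ∑ e, ((if a = e then 1 else 0) + (if e = x then p else 0)) * F e = F a + p * F x := by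
  simp only [add_mul, ite_mul, one_mul, zero_mul, Finset.sum_add_distrib, Finset.sum_ite_eq,
    Finset.sum_ite_eq', Finset.mem_univ, if_true]

theorem typeD_cancellation_f_comp_g_general
    {A : Type*} [Ring A]
    {G : Type*} [Fintype G] [DecidableEq G]
    (c : G → G → A)
    (x y : G) (hxy : x ≠ y)
    (u : Aˣ) :
    ∀ a b : {g : G // g ≠ x ∧ g ≠ y},
      ∑ e : G,
        ((if (↑a : G) = e then (1 : A) else 0)
            + (if e = x then c ↑a y * ((u⁻¹ : Aˣ) : A) else 0))
          * ((if e = y then ((u⁻¹ : Aˣ) : A) * c x ↑b else 0)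
            + (if e = ↑b then 1 else 0))
        = if a = b then 1 else 0 := by
  rintro ⟨a, -, hay⟩ ⟨b, hbx, -⟩
  rw [Finset.sum_ite_eq_add_ite_eq_mul]
  simp only [hay, hxy, hbx.symm, Subtype.mk.injEq, if_false, zero_add, add_zero, mul_zero]

/-- Type-D cancellation over a unital dg-algebra `A` over `𝔽₂`: with
`f_{yb} = c_{xy}⁻¹ c_{xb}`, `f_{bb} = 1` for `b ∈ G' = G \ {x,y}` and
`g_{aa} = 1`, `g_{ax} = c_{ay} c_{xy}⁻¹` for `a ∈ G'` (other coefficients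
zero), the composite satisfies `(f∘g)_{ab} = ∑_{c∈G} g_{ac} f_{cb} = δ_{ab}·1`
for all `a, b ∈ G'`: `f ∘ g` is the identity morphism. -/
theorem typeD_cancellation_f_comp_g
    {A : Type*} [Ring A] [Algebra (ZMod 2) A]
    (d : A →+ A)
    (hleib : ∀ a b : A, d (a * b) = d a * b + a * d b)
    (hd2 : ∀ a : A, d (d a) = 0)
    {G : Type*} [Fintype G] [DecidableEq G]
    (c : G → G → A)
    (hstr : ∀ a b : G, d (c a b) + ∑ e : G, c a e * c e b = 0)
    (x y : G) (hxy : x ≠ y)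
    (u : Aˣ) (hu : (u : A) = c x y) (hdu : d (c x y) = 0) :
    ∀ a b : {g : G // g ≠ x ∧ g ≠ y},
      ∑ e : G,
        ((if (↑a : G) = e then (1 : A) else 0)
            + (if e = x then c ↑a y * ((u⁻¹ : Aˣ) : A) else 0))
          * ((if e = y then ((u⁻¹ : Aˣ) : A) * c x ↑b else 0)
            + (if e = ↑b then 1 else 0))
        = if a = b then 1 else 0 :=
  typeD_cancellation_f_comp_g_general c x y hxy u
end

section
/- Under the hypotheses of type-D cancellation over a unital dg-algebra A over 𝔽₂, with h the map having sole nonzero coefficient h_{yx} = c_{xy}^{-1}, the composite g ∘ f satisfies (g∘f)_{ab} = δ_{ab}·1 + (h∘δ¹ + δ¹∘h)_{ab} for all a, b ∈ G, where (h∘δ¹)_{ab} = Σ_c c_{ac} h_{cb} and (δ¹∘h)_{ab} = Σ_c h_{ac} c_{cb}. -/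
/-!
Extend `f` and `g` to all of `G` by the same formulas. Since `c_{xy}` is inverted by `u⁻¹` and
`1 + 1 = 0`, the extended `f` has zero column `y` and the extended `g` has zero row `x`, so the sum
over `G'` defining `g ∘ f` may be taken over all of `G`. Expanding it then gives
`δ_{ab} + (h ∘ δ¹ + δ¹ ∘ h)_{ab}` plus the correction `u⁻¹ (∑_e c_{xe} c_{ey}) u⁻¹`, and this sum is
`d(c_{xy}) = 0` by the structure equation.
-/

open Finset

theorem Fintype.sum_subtype_eq_sum_of_forall_not_s15 {ι M : Type*} [Fintype ι] [AddCommMonoid M]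
    {p : ι → Prop} [DecidablePred p] (F : ι → M) (hF : ∀ i, ¬p i → F i = 0) :
    ∑ i : Subtype p, F i = ∑ i, F i := by
  rw [← Finset.sum_subtype (univ.filter p) (by simp) F]
  exact Finset.sum_filter_of_ne fun i _ hi => not_not.mp (mt (hF i) hi)

namespace TypeDCancellation

variable {A G : Type*} [Ring A] [DecidableEq G] (c : G → G → A) (x y : G) (v : A)

def f (a b : G) : A := (if a = y then v * c x b else 0) + (if a = b then 1 else 0)

def g (a b : G) : A := (if a = b then 1 else 0) + (if b = x then c a y * v else 0)

def h (a b : G) : A := if a = y ∧ b = x then v else 0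

variable {c x y v}

theorem f_apply_right_eq_zero [Module (ZMod 2) A] (hvc : v * c x y = 1) (a : G) :
    f c x y v a y = 0 := by
  by_cases ha : a = y <;> simp [f, ha, hvc, ZModModule.add_self]

theorem g_apply_left_eq_zero [Module (ZMod 2) A] (hcv : c x y * v = 1) (b : G) :
    g c x y v x b = 0 := by
  by_cases hb : b = x <;> simp [g, hb, hcv, eq_comm (a := x), ZModModule.add_self]

variable [Fintype G]

theorem sum_f_mul_g (hpath : ∑ e, c x e * c e y = 0) (a b : G) :
    ∑ e, f c x y v a e * g c x y v e b
      = (if a = b then 1 else 0) + ∑ e, c a e * h x y v e b + ∑ e, h x y v a e * c e b := by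
  have hcorrection : ∑ e, v * c x e * (c e y * v) = 0 :=
    calc ∑ e, v * c x e * (c e y * v) = v * (∑ e, c x e * c e y) * v := by
          simp only [Finset.mul_sum, Finset.sum_mul, mul_assoc]
      _ = 0 := by rw [hpath, mul_zero, zero_mul]
  simp only [f, g, h, mul_add, mul_ite, mul_one, mul_zero, add_mul, ite_mul, zero_mul, one_mul,
    sum_add_distrib, sum_ite_eq', mem_univ, ↓reduceIte, sum_ite_irrel, hcorrection,
    sum_const_zero, ite_self, sum_ite_eq, zero_add, ite_and]
  abel

end TypeDCancellation

theorem typeD_cancellation_g_comp_f_general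
    {A : Type*} [Ring A] [Algebra (ZMod 2) A]
    (d : A →+ A)
    {G : Type*} [Fintype G] [DecidableEq G]
    (c : G → G → A)
    (hstr : ∀ a b : G, d (c a b) + ∑ e : G, c a e * c e b = 0)
    (x y : G)
    (u : Aˣ) (hu : (u : A) = c x y) (hdu : d (c x y) = 0) :
    ∀ a b : G,
      ∑ e : {g : G // g ≠ x ∧ g ≠ y},
        ((if a = y then ((u⁻¹ : Aˣ) : A) * c x ↑e else 0)
            + (if a = ↑e then 1 else 0))
          * ((if (↑e : G) = b then (1 : A) else 0)
            + (if b = x then c ↑e y * ((u⁻¹ : Aˣ) : A) else 0))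
        = (if a = b then 1 else 0)
          + (∑ e : G, c a e * (if e = y ∧ b = x then ((u⁻¹ : Aˣ) : A) else 0))
          + (∑ e : G, (if a = y ∧ e = x then ((u⁻¹ : Aˣ) : A) else 0) * c e b) := by
  intro a b
  have hpath : ∑ e, c x e * c e y = 0 := by simpa [hdu] using hstr x y
  have hvc : ((u⁻¹ : Aˣ) : A) * c x y = 1 := hu ▸ u.inv_mul
  have hcv : c x y * ((u⁻¹ : Aˣ) : A) = 1 := hu ▸ u.mul_inv
  open TypeDCancellation in
  calc _ = ∑ e, f c x y _ a e * g c x y _ e b := by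
        refine Fintype.sum_subtype_eq_sum_of_forall_not_s15
          (fun e => f c x y _ a e * g c x y _ e b) fun e he => ?_
        rcases not_and_or.mp he with hex | hey
        · rw [not_not.mp hex, g_apply_left_eq_zero hcv, mul_zero]
        · rw [not_not.mp hey, f_apply_right_eq_zero hvc, zero_mul]
    _ = _ := sum_f_mul_g hpath a b

/-- Type-D cancellation over a unital dg-algebra `A` over `𝔽₂`: with `f`, `g`
as in the cancellation lemma and `h` the map with sole nonzero coefficient
`h_{yx} = c_{xy}⁻¹`, the composite `g ∘ f` satisfies
`(g∘f)_{ab} = δ_{ab}·1 + (h∘δ¹ + δ¹∘h)_{ab}` for all `a, b ∈ G`, where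
`(h∘δ¹)_{ab} = ∑_c c_{ac} h_{cb}` and `(δ¹∘h)_{ab} = ∑_c h_{ac} c_{cb}`. -/
theorem typeD_cancellation_g_comp_f
    {A : Type*} [Ring A] [Algebra (ZMod 2) A]
    (d : A →+ A)
    (hleib : ∀ a b : A, d (a * b) = d a * b + a * d b)
    (hd2 : ∀ a : A, d (d a) = 0)
    {G : Type*} [Fintype G] [DecidableEq G]
    (c : G → G → A)
    (hstr : ∀ a b : G, d (c a b) + ∑ e : G, c a e * c e b = 0)
    (x y : G) (hxy : x ≠ y)
    (u : Aˣ) (hu : (u : A) = c x y) (hdu : d (c x y) = 0) :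
    ∀ a b : G,
      ∑ e : {g : G // g ≠ x ∧ g ≠ y},
        ((if a = y then ((u⁻¹ : Aˣ) : A) * c x ↑e else 0)
            + (if a = ↑e then 1 else 0))
          * ((if (↑e : G) = b then (1 : A) else 0)
            + (if b = x then c ↑e y * ((u⁻¹ : Aˣ) : A) else 0))
        = (if a = b then 1 else 0)
          + (∑ e : G, c a e * (if e = y ∧ b = x then ((u⁻¹ : Aˣ) : A) else 0))
          + (∑ e : G, (if a = y ∧ e = x then ((u⁻¹ : Aˣ) : A) else 0) * c e b) :=
  typeD_cancellation_g_comp_f_general d c hstr x y u hu hdu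
end

section
/- Let F be the free group on a_1, b_1, a_2, b_2, and θ the endomorphism given by θ(a_1) = a_1 (b_2^{-1} a_2^{-1} b_2), θ(a_2) = a_2, θ(b_1) = b_1, θ(b_2) = a_2 b_2 (a_1^{-1} b_1 a_1)(b_2^{-1} a_2^{-1} b_2). Then θ is an automorphism of F. -/
namespace SlidingAlongA2

/-- The free group on `a₁, b₁, a₂, b₂` (indices `0,1,2,3`). -/
abbrev F := FreeGroup (Fin 4)

def a1 : F := FreeGroup.of 0
def b1 : F := FreeGroup.of 1
def a2 : F := FreeGroup.of 2
def b2 : F := FreeGroup.of 3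

/-- The endomorphism θ ('sliding along a₂'): `a₁ ↦ a₁ (b₂⁻¹ a₂⁻¹ b₂)`,
`b₁ ↦ b₁`, `a₂ ↦ a₂`, `b₂ ↦ a₂ b₂ (a₁⁻¹ b₁ a₁)(b₂⁻¹ a₂⁻¹ b₂)`. -/
noncomputable def θ : F →* F :=
  FreeGroup.lift
    ![a1 * (b2⁻¹ * a2⁻¹ * b2), b1, a2,
      a2 * b2 * (a1⁻¹ * b1 * a1) * (b2⁻¹ * a2⁻¹ * b2)]

@[simp] lemma θ_a1 : θ a1 = a1 * (b2⁻¹ * a2⁻¹ * b2) := FreeGroup.lift_apply_of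
@[simp] lemma θ_b1 : θ b1 = b1 := FreeGroup.lift_apply_of
@[simp] lemma θ_a2 : θ a2 = a2 := FreeGroup.lift_apply_of
@[simp] lemma θ_b2 : θ b2 = a2 * b2 * (a1⁻¹ * b1 * a1) * (b2⁻¹ * a2⁻¹ * b2) :=
  FreeGroup.lift_apply_of

/- Since `θ b₂ = b₂ · θ (a₁⁻¹ b₁ a₁)`, the inverse must send `b₂` to `d := b₂ a₁⁻¹ b₁⁻¹ a₁`,
and then `a₁` to `a₁ (d⁻¹ a₂ d)`. -/
noncomputable def θInv : F →* F :=
  FreeGroup.lift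
    ![a1 * ((a1⁻¹ * b1 * a1 * b2⁻¹) * a2 * (b2 * a1⁻¹ * b1⁻¹ * a1)), b1, a2,
      b2 * a1⁻¹ * b1⁻¹ * a1]

@[simp] lemma θInv_a1 :
    θInv a1 = a1 * ((a1⁻¹ * b1 * a1 * b2⁻¹) * a2 * (b2 * a1⁻¹ * b1⁻¹ * a1)) :=
  FreeGroup.lift_apply_of
@[simp] lemma θInv_b1 : θInv b1 = b1 := FreeGroup.lift_apply_of
@[simp] lemma θInv_a2 : θInv a2 = a2 := FreeGroup.lift_apply_of
@[simp] lemma θInv_b2 : θInv b2 = b2 * a1⁻¹ * b1⁻¹ * a1 := FreeGroup.lift_apply_of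

lemma ext_generators {G : Type*} [Group G] {f g : F →* G}
    (h_a1 : f a1 = g a1) (h_b1 : f b1 = g b1) (h_a2 : f a2 = g a2) (h_b2 : f b2 = g b2) :
    f = g := by
  refine FreeGroup.ext_hom _ _ fun i => ?_
  fin_cases i
  exacts [h_a1, h_b1, h_a2, h_b2]

lemma θInv_comp_θ : θInv.comp θ = MonoidHom.id F := by
  apply ext_generators <;> simp <;> group

lemma θ_comp_θInv : θ.comp θInv = MonoidHom.id F := by
  apply ext_generators <;> simp <;> group

/-- θ is an automorphism of the free group `F`. -/
theorem theta_automorphism :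
    ∃ θ' : F →* F, θ'.comp θ = MonoidHom.id F ∧ θ.comp θ' = MonoidHom.id F :=
  ⟨θInv, θInv_comp_θ, θ_comp_θInv⟩

end SlidingAlongA2
end
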